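/- Let L be a type of labels and let X = (V, E, s, t) be an L-labeled bipointed digraph with V finite. Then X admits a retraction r : X → X (a morphism with r ∘ r = r) such that the retract determined by r is pruned: the induced structure on Set.range r (with edge relation the restriction of E and basepoints s, t) admits no retraction other than the identity. -/

import Mathlib

/-- A morphism of `L`-labeled bipointed digraphs `(V, E, s, t) → (W, F, s', t')`:
a map on vertices preserving the start vertex, the end vertex, and labeled edges. -/
def IsLBDMorphism {L V W : Type*} (E : V → V → L → Prop) (s t : V)
    (F : W → W → L → Prop) (s' t' : W) (f : V → W) : Prop :=
  f s = s' ∧ f t = t' ∧ ∀ u v a, E u v a → F (f u) (f v) a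

/-- An `L`-labeled bipointed digraph is pruned if its only retraction
(idempotent morphism to itself) is the identity. -/
def IsPrunedLBD {L V : Type*} (E : V → V → L → Prop) (s t : V) : Prop :=
  ∀ r : V → V, IsLBDMorphism E s t E s t r → r ∘ r = r → r = id

/-! A retraction whose range is inclusion-minimal among ranges of retractions (one exists since
`V` is finite) has a pruned retract:
if `r'` were a nonidentity retraction of the retract on `Set.range r`, then following `r` by
`r'` would be a retraction of the whole digraph whose range misses a point of `Set.range r`. -/

section Retraction

variable {L U V W : Type*}

theorem IsLBDMorphism.comp {E : U → U → L → Prop} {s t : U} {F : V → V → L → Prop} {s' t' : V}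
    {G : W → W → L → Prop} {s'' t'' : W} {g : V → W} {f : U → V}
    (hg : IsLBDMorphism F s' t' G s'' t'' g) (hf : IsLBDMorphism E s t F s' t' f) :
    IsLBDMorphism E s t G s'' t'' (g ∘ f) :=
  ⟨by simp [hf.1, hg.1], by simp [hf.2.1, hg.2.1], fun u v a h => hg.2.2 _ _ a (hf.2.2 u v a h)⟩

variable (E : V → V → L → Prop) (s t : V)

def IsLBDRetraction (r : V → V) : Prop :=
  IsLBDMorphism E s t E s t r ∧ r ∘ r = r

theorem isLBDRetraction_id : IsLBDRetraction E s t id :=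
  ⟨⟨rfl, rfl, fun _ _ _ h => h⟩, rfl⟩

theorem isLBDMorphism_subtype_val (S : Set V) (hs : s ∈ S) (ht : t ∈ S) :
    IsLBDMorphism (fun (x y : S) (a : L) => E x y a) ⟨s, hs⟩ ⟨t, ht⟩ E s t Subtype.val :=
  ⟨rfl, rfl, fun _ _ _ h => h⟩

variable {E s t}

theorem IsLBDMorphism.rangeFactorization {r : V → V} (hr : IsLBDMorphism E s t E s t r)
    (hs : s ∈ Set.range r) (ht : t ∈ Set.range r) :
    IsLBDMorphism E s t (fun (x y : Set.range r) (a : L) => E x y a) ⟨s, hs⟩ ⟨t, ht⟩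
      (Set.rangeFactorization r) :=
  ⟨Subtype.ext hr.1, Subtype.ext hr.2.1, fun u v a h => hr.2.2 u v a h⟩

theorem rangeFactorization_coe_of_comp_self {r : V → V} (hrr : r ∘ r = r) (y : Set.range r) :
    Set.rangeFactorization r (y : V) = y := by
  obtain ⟨_, v, rfl⟩ := y
  exact Subtype.ext (congrFun hrr v)

theorem IsLBDRetraction.exists_range_ssubset_of_not_isPrunedLBD {r : V → V}
    (hr : IsLBDRetraction E s t r) (hs : s ∈ Set.range r) (ht : t ∈ Set.range r)
    (hnp : ¬ IsPrunedLBD (fun (x y : Set.range r) (a : L) => E x y a) ⟨s, hs⟩ ⟨t, ht⟩) :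
    ∃ q, IsLBDRetraction E s t q ∧ Set.range q ⊂ Set.range r := by
  simp only [IsPrunedLBD, not_forall] at hnp
  obtain ⟨r', hr'mor, hr'idem, hr'ne⟩ := hnp
  obtain ⟨x, hx⟩ : ∃ x, r' x ≠ x := by
    by_contra! h
    exact hr'ne (funext h)
  have hsection := rangeFactorization_coe_of_comp_self hr.2
  set q : V → V := Subtype.val ∘ r' ∘ Set.rangeFactorization r
  have hqmor : IsLBDMorphism E s t E s t q :=
    (isLBDMorphism_subtype_val E s t _ hs ht).comp
      (hr'mor.comp (hr.1.rangeFactorization hs ht))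
  have hqidem : q ∘ q = q := by
    funext v
    simp only [q, Function.comp_apply, hsection]
    exact congrArg Subtype.val (congrFun hr'idem _)
  refine ⟨q, ⟨hqmor, hqidem⟩, ?_, fun hsub => ?_⟩
  · rintro _ ⟨v, rfl⟩
    exact (r' _).2
  · obtain ⟨v, hv⟩ := hsub x.2
    have hxr' : r' (Set.rangeFactorization r v) = x := Subtype.ext hv
    exact hx (hxr' ▸ congrFun hr'idem _)

end Retraction

/-- Every finite `L`-labeled bipointed digraph admits a retraction `r` whose retract
(the induced structure on `Set.range r`, with the restricted edge relation and the same
basepoints) is pruned, i.e. admits no retraction other than the identity. -/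
theorem exists_pruned_retract
    {L V : Type*} [Finite V] (E : V → V → L → Prop) (s t : V) :
    ∃ r : V → V, IsLBDMorphism E s t E s t r ∧ r ∘ r = r ∧
      ∃ (hs : s ∈ Set.range r) (ht : t ∈ Set.range r),
        IsPrunedLBD (fun (x y : Set.range r) (a : L) => E (x : V) (y : V) a)
          ⟨s, hs⟩ ⟨t, ht⟩ := by
  obtain ⟨r, hmin⟩ := exists_minimalFor_of_wellFoundedLT (IsLBDRetraction E s t)
    Set.range ⟨id, isLBDRetraction_id E s t⟩
  have hr := hmin.prop
  have hs : s ∈ Set.range r := ⟨s, hr.1.1⟩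
  have ht : t ∈ Set.range r := ⟨t, hr.1.2.1⟩
  refine ⟨r, hr.1, hr.2, hs, ht, ?_⟩
  by_contra hnp
  obtain ⟨q, hq, hlt⟩ := hr.exists_range_ssubset_of_not_isPrunedLBD hs ht hnp
  exact hmin.not_lt hq hlt
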